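/- Characterization of the symmetrizing weight β = √3: for β > 0 and η ∈ (−1/√3, 1/√3), let M_β(η) be the 2×2 real matrix with rows (a(η), β·η) and (a₂(η)/β, a₁(η)), and let M_β^s(η) = (1/2)(M_β(η) + M_β(η)ᵀ). Then: (i) for every η ∈ (−1/√3, 1/√3) the eigenvalues of M_{√3}^s(η) are μ₊(η) and μ₋(η), where μ±(η) = 1 ± (√3·|η| / (6·(1−η²)²))·(3 − 2η² + 3η⁴), and M_{√3}^s(η) is positive definite (in particular μ₋(η) > 0); (ii) conversely, for every β > 0 with β ≠ √3 there exists η ∈ (−1/√3, 1/√3) such that M_β^s(η) is not positive definite. -/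

import Mathlib

/-!
The symmetric part of `M_β(η)` is `!![a, c_β; c_β, a₁]` with `c_β = (βη + a₂/β)/2`. Since
`a + a₁ = 2 = μ₊ + μ₋`, its characteristic polynomial is `μ² - 2μ + det`, and for `β = √3` the
determinant equals `μ₊ μ₋ = 1 - (μ₊ - 1)²`. It is positive for `t = η² < 1/3` because
`12 (1 - t)⁴ - t (3 - 2t + 3t²)²` has the factor `1 - 3t`, the cofactor being positive there.

For `β ≠ √3`, look at the endpoint `η = 1/√3`: there `a = 0` and `c_β ≠ 0`, so the determinant
`-c_β²` is negative, and by continuity it stays negative slightly inside the interval.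
-/

noncomputable section

open Real Filter MeasureTheory Set Matrix

/-- The coefficient `a(η) = (1 - 3η²)/(1 - η²)`. -/
def aGL (η : ℝ) : ℝ := (1 - 3 * η ^ 2) / (1 - η ^ 2)

/-- The coefficient `a₁(η) = (1 + η²)/(1 - η²)`. -/
def a1GL (η : ℝ) : ℝ := (1 + η ^ 2) / (1 - η ^ 2)

/-- The coefficient `a₂(η) = -4η³/(1 - η²)²`. -/
def a2GL (η : ℝ) : ℝ := -4 * η ^ 3 / (1 - η ^ 2) ^ 2

/-- The matrix `M_β(η)` with rows `(a(η), βη)` and `(a₂(η)/β, a₁(η))`. -/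
def Mbeta (β η : ℝ) : Matrix (Fin 2) (Fin 2) ℝ :=
  !![aGL η, β * η; a2GL η / β, a1GL η]

/-- The symmetrized matrix `M_β^s(η) = (1/2)(M_β(η) + M_β(η)ᵀ)`. -/
def MbetaS (β η : ℝ) : Matrix (Fin 2) (Fin 2) ℝ :=
  (1 / 2 : ℝ) • (Mbeta β η + (Mbeta β η)ᵀ)

/-- The eigenvalues `μ±(η)` of `M_{√3}^s(η)`; `sign = 1` gives `μ₊`, `sign = -1`
gives `μ₋`. -/
def muGL (sign η : ℝ) : ℝ :=
  1 + sign * (Real.sqrt 3 * |η| / (6 * (1 - η ^ 2) ^ 2)) * (3 - 2 * η ^ 2 + 3 * η ^ 4)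

open Topology

namespace Matrix

theorem posDef_fin_two_of {K : Type*} [Field K] [LinearOrder K] [IsStrictOrderedRing K]
    [StarRing K] [TrivialStar K] {a b c : K} (ha : 0 < a) (hdet : 0 < a * c - b ^ 2) :
    (!![a, b; b, c]).PosDef := by
  refine PosDef.of_dotProduct_mulVec_pos ?_ fun x hx => ?_
  · ext i j
    fin_cases i <;> fin_cases j <;> simp
  · have hsq : a * (star x ⬝ᵥ (!![a, b; b, c] *ᵥ x))
        = (a * x 0 + b * x 1) ^ 2 + (a * c - b ^ 2) * x 1 ^ 2 := by
      simp only [dotProduct, Pi.star_apply, star_trivial, mulVec, of_apply, cons_val',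
        cons_val_fin_one, Fin.sum_univ_two, Fin.isValue, cons_val_zero, cons_val_one]
      ring
    refine pos_of_mul_pos_right (hsq ▸ ?_) ha.le
    rcases eq_or_ne (x 1) 0 with h1 | h1
    · have h0 : x 0 ≠ 0 := fun h0 => hx (by ext i; fin_cases i <;> assumption)
      simpa [h1] using sq_pos_of_ne_zero (mul_ne_zero ha.ne' h0)
    · exact add_pos_of_nonneg_of_pos (sq_nonneg _) (mul_pos hdet (sq_pos_of_ne_zero h1))

theorem det_sub_smul_one_fin_two {R : Type*} [CommRing R] (A : Matrix (Fin 2) (Fin 2) R)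
    {p q : R} (htrace : A 0 0 + A 1 1 = p + q) (hdet : A.det = p * q) (μ : R) :
    (A - μ • 1).det = (p - μ) * (q - μ) := by
  rw [det_fin_two] at hdet ⊢
  simp only [sub_apply, smul_apply, one_apply_eq, one_apply_ne zero_ne_one,
    one_apply_ne one_ne_zero, smul_eq_mul, mul_one, mul_zero, sub_zero]
  linear_combination hdet - μ * htrace

end Matrix

def offDiagGL (β η : ℝ) : ℝ := (β * η + a2GL η / β) / 2

lemma MbetaS_eq (β η : ℝ) :
    MbetaS β η = !![aGL η, offDiagGL β η; offDiagGL β η, a1GL η] := by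
  ext i j
  fin_cases i <;> fin_cases j <;>
    simp only [MbetaS, Mbeta, offDiagGL, Fin.zero_eta, Fin.mk_one, Fin.isValue, Matrix.smul_apply,
      Matrix.add_apply, of_apply, cons_val', cons_val_zero, cons_val_one, cons_val_fin_one,
      transpose_apply, smul_eq_mul] <;> ring

lemma det_MbetaS (β η : ℝ) :
    (MbetaS β η).det = aGL η * a1GL η - offDiagGL β η ^ 2 := by
  rw [MbetaS_eq, det_fin_two_of]
  ring

lemma aGL_add_a1GL {η : ℝ} (hη : η ^ 2 ≠ 1) : aGL η + a1GL η = 2 := by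
  have : 1 - η ^ 2 ≠ 0 := sub_ne_zero.mpr (Ne.symm hη)
  rw [aGL, a1GL, ← add_div, div_eq_iff this]
  ring

lemma muGL_one_add_muGL_neg_one (η : ℝ) : muGL 1 η + muGL (-1) η = 2 := by
  rw [muGL, muGL]
  ring

lemma muGL_one_mul_muGL_neg_one (η : ℝ) :
    muGL 1 η * muGL (-1) η
      = 1 - η ^ 2 * (3 - 2 * η ^ 2 + 3 * η ^ 4) ^ 2 / (12 * (1 - η ^ 2) ^ 4) := by
  calc muGL 1 η * muGL (-1) η
      = 1 - (√3 * |η| / (6 * (1 - η ^ 2) ^ 2) * (3 - 2 * η ^ 2 + 3 * η ^ 4)) ^ 2 := by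
        simp only [muGL]
        ring
    _ = _ := by
        rw [mul_pow, div_pow, mul_pow, sq_sqrt (by norm_num : (0 : ℝ) ≤ 3), sq_abs]
        generalize 1 - η ^ 2 = d
        ring

lemma offDiagGL_sqrt_three_sq (η : ℝ) : offDiagGL √3 η ^ 2 = (3 * η + a2GL η) ^ 2 / 12 := by
  have hs : √3 ^ 2 = 3 := sq_sqrt (by norm_num)
  have hs0 : √3 ≠ 0 := by positivity
  simp only [offDiagGL]
  field_simp
  rw [hs]
  ring

lemma aGL_mul_a1GL_sub_offDiagGL_sqrt_three_sq {η : ℝ} (hη : η ^ 2 ≠ 1) :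
    aGL η * a1GL η - offDiagGL √3 η ^ 2 = muGL 1 η * muGL (-1) η := by
  have : 1 - η ^ 2 ≠ 0 := sub_ne_zero.mpr (Ne.symm hη)
  rw [offDiagGL_sqrt_three_sq, muGL_one_mul_muGL_neg_one]
  simp only [aGL, a1GL, a2GL]
  field_simp
  ring

lemma mem_Ioo_inv_sqrt_three_iff {η : ℝ} :
    η ∈ Ioo (-(1 / √3)) (1 / √3) ↔ η ^ 2 < 1 / 3 := by
  rw [Real.sq_lt, one_div, one_div, ← Real.sqrt_inv]
  rfl

lemma det_MbetaS_sqrt_three_sub_smul_one {η : ℝ} (hη : η ^ 2 ≠ 1) (μ : ℝ) :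
    (MbetaS √3 η - μ • (1 : Matrix (Fin 2) (Fin 2) ℝ)).det
      = (muGL 1 η - μ) * (muGL (-1) η - μ) :=
  det_sub_smul_one_fin_two _
    (by simpa [MbetaS_eq, muGL_one_add_muGL_neg_one] using aGL_add_a1GL hη)
    (by rw [det_MbetaS, aGL_mul_a1GL_sub_offDiagGL_sqrt_three_sq hη]) μ

lemma one_le_muGL_one (η : ℝ) : 1 ≤ muGL 1 η := by
  have hP : 0 < 3 - 2 * η ^ 2 + 3 * η ^ 4 := by nlinarith [sq_nonneg (η ^ 2 - 1)]
  simp only [muGL, one_mul, le_add_iff_nonneg_right]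
  positivity

lemma muGL_one_mul_muGL_neg_one_pos {η : ℝ} (hη : η ^ 2 < 1 / 3) :
    0 < muGL 1 η * muGL (-1) η := by
  have ht : 0 ≤ η ^ 2 := sq_nonneg η
  have hQ : 0 < 12 - 21 * η ^ 2 + 21 * η ^ 4 - 7 * η ^ 6 + 3 * η ^ 8 := by
    nlinarith [mul_nonneg (mul_nonneg ht ht) (by linarith : (0 : ℝ) ≤ 3 - η ^ 2),
      pow_nonneg ht 4]
  have hfactor : 12 * (1 - η ^ 2) ^ 4 - η ^ 2 * (3 - 2 * η ^ 2 + 3 * η ^ 4) ^ 2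
      = (1 - 3 * η ^ 2) * (12 - 21 * η ^ 2 + 21 * η ^ 4 - 7 * η ^ 6 + 3 * η ^ 8) := by
    ring
  have hdiff : η ^ 2 * (3 - 2 * η ^ 2 + 3 * η ^ 4) ^ 2 < 12 * (1 - η ^ 2) ^ 4 := by
    linarith [mul_pos (by linarith : (0 : ℝ) < 1 - 3 * η ^ 2) hQ]
  have hD : 0 < 1 - η ^ 2 := by linarith
  rw [muGL_one_mul_muGL_neg_one, sub_pos, div_lt_one (by positivity)]
  exact hdiff

lemma muGL_neg_one_pos {η : ℝ} (hη : η ^ 2 < 1 / 3) : 0 < muGL (-1) η :=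
  pos_of_mul_pos_right (muGL_one_mul_muGL_neg_one_pos hη)
    (zero_le_one.trans (one_le_muGL_one η))

lemma posDef_MbetaS_sqrt_three {η : ℝ} (hη : η ^ 2 < 1 / 3) : (MbetaS √3 η).PosDef := by
  rw [MbetaS_eq]
  refine posDef_fin_two_of (div_pos (by linarith) (by linarith)) ?_
  rw [aGL_mul_a1GL_sub_offDiagGL_sqrt_three_sq (by linarith)]
  exact muGL_one_mul_muGL_neg_one_pos hη

lemma aGL_inv_sqrt_three : aGL (1 / √3) = 0 := by
  simp [aGL]

lemma a2GL_inv_sqrt_three : a2GL (1 / √3) = -√3 := by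
  have hs : √3 ^ 2 = 3 := sq_sqrt (by norm_num)
  have hη₀ : (1 / √3) ^ 2 = 1 / 3 := by rw [div_pow, one_pow, hs]
  rw [a2GL, pow_succ, hη₀]
  field_simp
  linear_combination 4 * hs

lemma det_MbetaS_inv_sqrt_three_neg {β : ℝ} (hβ : 0 < β) (hβ3 : β ≠ √3) :
    (MbetaS β (1 / √3)).det < 0 := by
  rw [det_MbetaS, aGL_inv_sqrt_three, zero_mul, zero_sub, neg_lt_zero]
  refine sq_pos_of_ne_zero fun h => hβ3 ?_
  have hs : √3 ^ 2 = 3 := sq_sqrt (by norm_num)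
  have hs0 : √3 ≠ 0 := by positivity
  have hβ2 : β ^ 2 = 3 := by
    simp only [offDiagGL, a2GL_inv_sqrt_three] at h
    field_simp at h
    linarith
  rw [← hβ2, Real.sqrt_sq hβ.le]

lemma continuousAt_det_MbetaS (β : ℝ) {η : ℝ} (hη : η ^ 2 ≠ 1) :
    ContinuousAt (fun η => (MbetaS β η).det) η := by
  have hd : 1 - η ^ 2 ≠ 0 := sub_ne_zero.mpr (Ne.symm hη)
  simp only [det_MbetaS, aGL, a1GL, a2GL, offDiagGL]
  fun_prop (disch := first | exact hd | exact pow_ne_zero 2 hd)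

lemma exists_mem_Ioo_det_MbetaS_neg {β : ℝ} (hβ : 0 < β) (hβ3 : β ≠ √3) :
    ∃ η ∈ Ioo (-(1 / √3)) (1 / √3), (MbetaS β η).det < 0 := by
  have hη₀ : (1 / √3) ^ 2 ≠ 1 := by simp
  have hneg : ∀ᶠ η in 𝓝[<] (1 / √3), (MbetaS β η).det < 0 :=
    nhdsWithin_le_nhds <| (continuousAt_det_MbetaS β hη₀).eventually_lt_const
      (det_MbetaS_inv_sqrt_three_neg hβ hβ3)
  have hIoo : Ioo (-(1 / √3)) (1 / √3) ∈ 𝓝[<] (1 / √3) :=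
    Ioo_mem_nhdsLT (by simp only [neg_lt_self_iff]; positivity)
  exact (hneg.and hIoo).exists.imp fun η h => ⟨h.2, h.1⟩

/-- Characterization of the symmetrizing weight `β = √3`: for `β = √3` the
symmetrized matrix has eigenvalues `μ±(η)` and is positive definite on the whole
Eckhaus-stable range, while for any other `β > 0` positive definiteness fails
for some `η`. -/
theorem symmetrizer_characterization :
    (∀ η ∈ Set.Ioo (-(1 / Real.sqrt 3)) (1 / Real.sqrt 3),
      (∀ μ : ℝ, (MbetaS (Real.sqrt 3) η - μ • (1 : Matrix (Fin 2) (Fin 2) ℝ)).det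
          = (muGL 1 η - μ) * (muGL (-1) η - μ)) ∧
      (MbetaS (Real.sqrt 3) η).PosDef ∧
      0 < muGL (-1) η) ∧
    (∀ β > (0:ℝ), β ≠ Real.sqrt 3 →
      ∃ η ∈ Set.Ioo (-(1 / Real.sqrt 3)) (1 / Real.sqrt 3),
        ¬ (MbetaS β η).PosDef) := by
  refine ⟨fun η hη => ?_, fun β hβ hβ3 => ?_⟩
  · have hη3 : η ^ 2 < 1 / 3 := mem_Ioo_inv_sqrt_three_iff.mp hη
    exact ⟨det_MbetaS_sqrt_three_sub_smul_one (by linarith), posDef_MbetaS_sqrt_three hη3,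
      muGL_neg_one_pos hη3⟩
  · obtain ⟨η, hη, hdet⟩ := exists_mem_Ioo_det_MbetaS_neg hβ hβ3
    exact ⟨η, hη, fun hpd => hdet.not_gt hpd.det_pos⟩
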